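/- arXiv:2006.16144 — 2 statements merged into one kernel-verified Lean document; each statement's English description precedes it below -/
import Mathlib

section
/- Let $X,Y$ be Banach spaces with $Y = L^p(\mathbb{D})$, and let $\mathcal{D}: X \to Y$ satisfy the stability bound $\|u - v\|_X \le C_{pde} \|\mathcal{D}(u) - \mathcal{D}(v)\|_Y$ for all $u,v$ in a subspace $Z$. Suppose $u$ solves $\mathcal{D}(u) = f$ and $u^*$ is any element of $Z$ with residual $\mathcal{R} = \mathcal{D}(u^*) - f$. If the quadrature rule with weights $w_n \ge 0$ and points $y_n$ satisfies $\big| \int_{\mathbb{D}} |\mathcal{R}(y)|^p dy - \sum_{n=1}^N w_n |\mathcal{R}(y_n)|^p \big| \le C_{quad} N^{-\alpha}$, then with training error $\mathcal{E}_T = (\sum_n w_n |\mathcal{R}(y_n)|^p)^{1/p}$, the generalization error satisfies $\|u - u^*\|_X \le C_{pde} \mathcal{E}_T + C_{pde} C_{quad}^{1/p} N^{-\alpha/p}$. -/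
open MeasureTheory

lemma real_rpow_add_le_add_rpow {x y p : ℝ} (hx : 0 ≤ x) (hy : 0 ≤ y)
    (hp0 : 0 ≤ p) (hp1 : p ≤ 1) : (x + y) ^ p ≤ x ^ p + y ^ p := by
  lift x to NNReal using hx
  lift y to NNReal using hy
  have := NNReal.rpow_add_le_add_rpow x y hp0 hp1
  exact_mod_cast this

/-- Abstract PINN generalization error estimate (Theorem 1): if the PDE operator `𝒟`
satisfies the stability bound on a subspace `Z`, `u` solves `𝒟 u = f`, `u*` is any
element of `Z` with residual `ℛ = 𝒟 u* - f`, and the quadrature rule with nonnegative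
weights approximates `∫ |ℛ|^p` with error at most `C_quad N^{-α}`, then with training error
`ℰ_T = (∑ wₙ |ℛ(yₙ)|^p)^{1/p}` one has
`‖u - u*‖_X ≤ C_pde ℰ_T + C_pde C_quad^{1/p} N^{-α/p}`. -/
theorem pinn_generalization_bound
    {X : Type*} [NormedAddCommGroup X] [NormedSpace ℝ X]
    {𝔻 : Type*} [MeasurableSpace 𝔻] (μ : Measure 𝔻)
    (𝒟 : X → 𝔻 → ℝ) (Z : Set X) (Cpde Cquad α p : ℝ)
    (hp : 1 ≤ p) (hCpde : 0 < Cpde) (hCquad : 0 < Cquad) (hα : 0 < α)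
    (N : ℕ) (hN : 0 < N) (w : Fin N → ℝ) (hw : ∀ n, 0 ≤ w n) (y : Fin N → 𝔻)
    (u ustar : X) (f : 𝔻 → ℝ)
    (hu : u ∈ Z) (hustar : ustar ∈ Z)
    (hsol : ∀ z, 𝒟 u z = f z)
    (hstab : ∀ v v' : X, v ∈ Z → v' ∈ Z →
      ‖v - v'‖ ≤ Cpde * (∫ z, |𝒟 v z - 𝒟 v' z| ^ p ∂μ) ^ (1 / p))
    (ℛ : 𝔻 → ℝ) (hℛ : ℛ = fun z => 𝒟 ustar z - f z)
    (hquad : |(∫ z, |ℛ z| ^ p ∂μ) - ∑ n, w n * |ℛ (y n)| ^ p| ≤ Cquad * (N : ℝ) ^ (-α))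
    (ET : ℝ) (hET : ET = (∑ n, w n * |ℛ (y n)| ^ p) ^ (1 / p)) :
    ‖u - ustar‖ ≤ Cpde * ET + Cpde * Cquad ^ (1 / p) * (N : ℝ) ^ (-α / p) := by
  have hp0 : 0 < p := lt_of_lt_of_le zero_lt_one hp
  set S : ℝ := ∑ n, w n * |ℛ (y n)| ^ p with hS
  have hSnn : 0 ≤ S := Finset.sum_nonneg fun n _ =>
    mul_nonneg (hw n) (Real.rpow_nonneg (abs_nonneg _) p)
  have hNpos : (0 : ℝ) < (N : ℝ) := by exact_mod_cast hN
  have hQnn : 0 ≤ Cquad * (N : ℝ) ^ (-α) :=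
    mul_nonneg hCquad.le (Real.rpow_nonneg hNpos.le _)
  -- integral equality
  have habs : ∀ z, |𝒟 u z - 𝒟 ustar z| = |ℛ z| := by
    intro z
    rw [hℛ]
    simp only [hsol z]
    rw [abs_sub_comm]
  have hI : (∫ z, |𝒟 u z - 𝒟 ustar z| ^ p ∂μ) = ∫ z, |ℛ z| ^ p ∂μ := by
    congr 1; funext z; rw [habs z]
  have hIle : (∫ z, |ℛ z| ^ p ∂μ) ≤ S + Cquad * (N : ℝ) ^ (-α) := by
    have := abs_le.mp hquad
    linarith [this.2]
  have h1 : ‖u - ustar‖ ≤ Cpde * (∫ z, |ℛ z| ^ p ∂μ) ^ (1 / p) := by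
    have := hstab u ustar hu hustar
    rwa [hI] at this
  have hInn : 0 ≤ ∫ z, |ℛ z| ^ p ∂μ :=
    integral_nonneg fun z => Real.rpow_nonneg (abs_nonneg _) p
  have h2 : (∫ z, |ℛ z| ^ p ∂μ) ^ (1 / p) ≤ (S + Cquad * (N : ℝ) ^ (-α)) ^ (1 / p) :=
    Real.rpow_le_rpow hInn hIle (by positivity)
  have h3 : (S + Cquad * (N : ℝ) ^ (-α)) ^ (1 / p)
      ≤ S ^ (1 / p) + (Cquad * (N : ℝ) ^ (-α)) ^ (1 / p) :=
    real_rpow_add_le_add_rpow hSnn hQnn (by positivity)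
      (by rw [div_le_one hp0]; linarith)
  have h4 : (Cquad * (N : ℝ) ^ (-α)) ^ (1 / p)
      = Cquad ^ (1 / p) * (N : ℝ) ^ (-α / p) := by
    rw [Real.mul_rpow hCquad.le (Real.rpow_nonneg hNpos.le _),
      ← Real.rpow_mul hNpos.le, neg_mul, mul_one_div, ← neg_div]
  calc ‖u - ustar‖ ≤ Cpde * (∫ z, |ℛ z| ^ p ∂μ) ^ (1 / p) := h1
    _ ≤ Cpde * (S ^ (1 / p) + (Cquad * (N : ℝ) ^ (-α)) ^ (1 / p)) :=
        mul_le_mul_of_nonneg_left (h2.trans h3) hCpde.le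
    _ = Cpde * ET + Cpde * Cquad ^ (1 / p) * (N : ℝ) ^ (-α / p) := by
        rw [hET, h4]; ring
end

section
/- Let $u, u^* \in C^2([0,1] \times [0,T])$, let $\nu > 0$, $f \in C^2(\mathbb{R})$, and suppose $u$ solves $u_t + f(u)_x = \nu u_{xx}$ on $(0,1) \times (0,T)$ with $u(0,t) = u(1,t) = 0$. Set $\hat u = u^* - u$ and $\mathcal{R}_{int} = u^*_t + f(u^*)_x - \nu u^*_{xx}$. Then for all $t$, $$\frac{d}{dt}\int_0^1 \hat u^2(x,t)\,dx \le 2H(u(0,t),u^*(0,t)) - 2H(u(1,t),u^*(1,t)) + \mathbf{C} \int_0^1 \hat u^2\,dx + \int_0^1 \mathcal{R}_{int}^2\,dx - 2\nu\int_0^1 \hat u_x^2\,dx + 2\nu(\hat u(1,t)\hat u_x(1,t) - \hat u(0,t)\hat u_x(0,t)),$$ where $H(u,u^*) = Q(u^*) - Q(u) - u(f(u^*)-f(u))$ with $Q(u) = \int_a^u s f'(s)\,ds$, and $\mathbf{C} = 1 + 2\|f''\|_{L^\infty(I)}\|u_x\|_{L^\infty}$ with $I$ the range interval containing values of $u$ and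 $u^*$. -/
/-!
With `ŵ = u* - u` and `R = u*_t + f(u*)_x - ν u*_xx`, the equation for `u` gives, pointwise in
`x ∈ (0,1)`,
`2 ŵ ŵ_t = 2 ŵ R - 2 ∂ₓ H(u, u*) - 2 u_x (f(u*) - f(u) - f'(u) ŵ) + 2 ν ŵ ŵ_xx`.
Integrating in `x`, the flux term leaves the boundary values of `H`, integration by parts turns
the viscous term into the boundary term minus `2ν ∫ ŵ_x²`, Young's inequality bounds
`2 ŵ R ≤ ŵ² + R²`, and the Taylor remainder is at most `sup |f''| · ŵ²`, with `|u_x| ≤ Mx`.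
-/

/-- Entropy flux `Q(u) = ∫_a^u s f'(s) ds`. -/
noncomputable def Qent (f : ℝ → ℝ) (a v : ℝ) : ℝ := ∫ s in a..v, s * deriv f s

/-- Relative entropy flux `H(u,u*) = Q(u*) - Q(u) - u (f(u*) - f(u))`. -/
noncomputable def Hent (f : ℝ → ℝ) (a U Ustar : ℝ) : ℝ :=
  Qent f a Ustar - Qent f a U - U * (f Ustar - f U)

open MeasureTheory Set

section PartialDerivatives

variable {F : ℝ → ℝ → ℝ} {n : WithTop ℕ∞}

theorem ContDiff.along_fst (hF : ContDiff ℝ n (fun q : ℝ × ℝ => F q.1 q.2)) (t : ℝ) :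
    ContDiff ℝ n (fun x => F x t) :=
  hF.comp (contDiff_id.prodMk contDiff_const)

theorem ContDiff.along_snd (hF : ContDiff ℝ n (fun q : ℝ × ℝ => F q.1 q.2)) (x : ℝ) :
    ContDiff ℝ n (fun s => F x s) :=
  hF.comp (contDiff_const.prodMk contDiff_id)

theorem continuous_deriv_snd_of_contDiff (hF : ContDiff ℝ 1 (fun q : ℝ × ℝ => F q.1 q.2)) :
    Continuous fun q : ℝ × ℝ => deriv (fun s => F q.1 s) q.2 := by
  have hpartial : ∀ q : ℝ × ℝ,
      deriv (fun s => F q.1 s) q.2 = fderiv ℝ (fun q : ℝ × ℝ => F q.1 q.2) q (0, 1) :=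
    fun ⟨x, t⟩ => ((hF.differentiable one_ne_zero (x, t)).hasFDerivAt.comp_hasDerivAt t
      ((hasDerivAt_const t x).prodMk (hasDerivAt_id' t))).deriv
  simpa only [hpartial] using (hF.continuous_fderiv one_ne_zero).clm_apply continuous_const

theorem hasDerivAt_intervalIntegral_of_contDiff
    (hF : ContDiff ℝ 1 (fun q : ℝ × ℝ => F q.1 q.2)) (a b t : ℝ) :
    HasDerivAt (fun s => ∫ x in a..b, F x s) (∫ x in a..b, deriv (fun s => F x s) t) t := by
  have hF' := continuous_deriv_snd_of_contDiff hF
  obtain ⟨K, hK⟩ := IsCompact.exists_bound_of_continuousOn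
    (isCompact_uIcc.prod (isCompact_Icc (a := t - 1) (b := t + 1))) hF'.continuousOn
  refine (intervalIntegral.hasDerivAt_integral_of_dominated_loc_of_deriv_le
    (bound := fun _ => K) (Icc_mem_nhds (sub_one_lt t) (lt_add_one t))
    (.of_forall fun s => (hF.along_fst s).continuous.aestronglyMeasurable)
    ((hF.along_fst t).continuous.intervalIntegrable a b)
    (hF'.comp (continuous_id.prodMk continuous_const)).aestronglyMeasurable
    (ae_of_all _ fun x hx s hs => hK (x, s) ⟨uIoc_subset_uIcc hx, hs⟩)
    intervalIntegrable_const
    (ae_of_all _ fun x _ s _ => ((hF.along_snd x).differentiable one_ne_zero s).hasDerivAt)).2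

end PartialDerivatives

section OneVariable

variable {f : ℝ → ℝ}

theorem Continuous.le_ciSup_Icc {g : ℝ → ℝ} (hg : Continuous g) {a b s : ℝ}
    (hs : s ∈ Icc a b) : g s ≤ ⨆ y : Icc a b, g y := by
  refine le_ciSup (f := fun y : Icc a b => g y) ?_ ⟨s, hs⟩
  rw [← image_eq_range]
  exact isCompact_Icc.bddAbove_image hg.continuousOn

theorem abs_sub_sub_deriv_mul_le (hf : ContDiff ℝ 2 f) {S : Set ℝ} (hS : Convex ℝ S) {C : ℝ}
    (hC : ∀ s ∈ S, |deriv (deriv f) s| ≤ C) {p q : ℝ} (hp : p ∈ S) (hq : q ∈ S) :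
    |f q - f p - deriv f p * (q - p)| ≤ C * (q - p) ^ 2 := by
  have hf' : ContDiff ℝ 1 (deriv f) := hf.deriv'
  have hC0 : 0 ≤ C := (abs_nonneg _).trans (hC p hp)
  have hf'_lip : ∀ s ∈ uIcc p q, ‖deriv f s - deriv f p‖ ≤ C * ‖q - p‖ := by
    intro s hs
    calc ‖deriv f s - deriv f p‖ ≤ C * ‖s - p‖ :=
          hS.norm_image_sub_le_of_norm_deriv_le (fun y _ => hf'.differentiable one_ne_zero y)
            hC hp (hS.ordConnected.uIcc_subset hp hq hs)
      _ ≤ C * ‖q - p‖ := by gcongr; exact abs_sub_left_of_mem_uIcc hs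
  have hmvt := (convex_uIcc p q).norm_image_sub_le_of_norm_hasDerivWithin_le
    (f := fun s => f s - deriv f p * s)
    (fun s _ => (((hf.differentiable two_ne_zero s).hasDerivAt).sub
      ((hasDerivAt_id s).const_mul (deriv f p))).hasDerivWithinAt)
    (fun s hs => by simpa using hf'_lip s hs) left_mem_uIcc right_mem_uIcc
  calc |f q - f p - deriv f p * (q - p)|
        = ‖(f q - deriv f p * q) - (f p - deriv f p * p)‖ := by rw [Real.norm_eq_abs]; ring_nf
    _ ≤ C * ‖q - p‖ * ‖q - p‖ := hmvt
    _ = C * (q - p) ^ 2 := by rw [Real.norm_eq_abs, mul_assoc, abs_mul_abs_self, sq]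

theorem hasDerivAt_Qent (hf : Continuous (deriv f)) (c v : ℝ) :
    HasDerivAt (Qent f c) (v * deriv f v) v :=
  ((continuous_id.mul hf).integral_hasStrictDerivAt c v).hasDerivAt

theorem hasDerivAt_Hent_comp (hf : ContDiff ℝ 1 f) (c : ℝ) {v w : ℝ → ℝ} {v' w' x : ℝ}
    (hv : HasDerivAt v v' x) (hw : HasDerivAt w w' x) :
    HasDerivAt (fun y => Hent f c (v y) (w y))
      ((w x - v x) * deriv f (w x) * w' - v' * (f (w x) - f (v x))) x := by
  have hfd (y : ℝ) : HasDerivAt f (deriv f y) y := (hf.differentiable one_ne_zero y).hasDerivAt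
  have hQ (y : ℝ) := hasDerivAt_Qent (hf.continuous_deriv le_rfl) c y
  exact ((((hQ (w x)).comp x hw).sub ((hQ (v x)).comp x hv)).sub
    (hv.mul (((hfd (w x)).comp x hw).sub ((hfd (v x)).comp x hv)))).congr_deriv
      (by simp only [Pi.sub_apply, Function.comp_apply]; ring)

theorem integral_Hent_flux_eq_sub (hf : ContDiff ℝ 1 f) (c : ℝ) {v w : ℝ → ℝ}
    (hv : ContDiff ℝ 1 v) (hw : ContDiff ℝ 1 w) (a b : ℝ) :
    ∫ x in a..b, ((w x - v x) * deriv f (w x) * deriv w x - deriv v x * (f (w x) - f (v x))) =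
      Hent f c (v b) (w b) - Hent f c (v a) (w a) := by
  have := hf.continuous_deriv le_rfl
  have := hv.continuous_deriv le_rfl
  have := hw.continuous_deriv le_rfl
  have := hf.continuous
  have := hv.continuous
  have := hw.continuous
  refine intervalIntegral.integral_eq_sub_of_hasDerivAt (fun x _ => hasDerivAt_Hent_comp hf c
    (hv.differentiable one_ne_zero x).hasDerivAt (hw.differentiable one_ne_zero x).hasDerivAt) ?_
  exact Continuous.intervalIntegrable (by fun_prop) a b

theorem integral_mul_deriv_deriv_eq {w : ℝ → ℝ} (hw : ContDiff ℝ 2 w) (a b : ℝ) :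
    ∫ x in a..b, w x * deriv (deriv w) x =
      w b * deriv w b - w a * deriv w a - ∫ x in a..b, deriv w x ^ 2 := by
  have hw' : ContDiff ℝ 1 (deriv w) := hw.deriv'
  simp only [sq]
  exact intervalIntegral.integral_mul_deriv_eq_deriv_mul
    (fun x _ => (hw.differentiable two_ne_zero x).hasDerivAt)
    (fun x _ => (hw'.differentiable one_ne_zero x).hasDerivAt)
    ((hw.continuous_deriv one_le_two).intervalIntegrable a b)
    ((hw'.continuous_deriv le_rfl).intervalIntegrable a b)

theorem integral_two_mul_le_integral_sq_add {g h : ℝ → ℝ} (hg : Continuous g)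
    (hh : Continuous h) {a b : ℝ} (hab : a ≤ b) :
    2 * ∫ x in a..b, g x * h x ≤ (∫ x in a..b, g x ^ 2) + ∫ x in a..b, h x ^ 2 := by
  rw [← intervalIntegral.integral_const_mul, ← intervalIntegral.integral_add
    (f := fun x => g x ^ 2) (g := fun x => h x ^ 2)
    ((hg.pow 2).intervalIntegrable a b) ((hh.pow 2).intervalIntegrable a b)]
  refine intervalIntegral.integral_mono_on hab
    ((continuous_const.mul (hg.mul hh)).intervalIntegrable a b)
    (((hg.pow 2).add (hh.pow 2)).intervalIntegrable a b) fun x _ => ?_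
  linarith [two_mul_le_add_sq (g x) (h x)]

theorem neg_mul_integral_sq_le_integral_mul_taylor_remainder (hf : ContDiff ℝ 2 f)
    {S : Set ℝ} (hS : Convex ℝ S) {C M a b : ℝ} (hC : ∀ s ∈ S, |deriv (deriv f) s| ≤ C)
    {g v w : ℝ → ℝ} (hg : Continuous g) (hv : Continuous v) (hw : Continuous w)
    (hab : a ≤ b) (hgM : ∀ x ∈ Icc a b, |g x| ≤ M) (hvS : ∀ x ∈ Icc a b, v x ∈ S)
    (hwS : ∀ x ∈ Icc a b, w x ∈ S) :
    -(C * M) * ∫ x in a..b, (w x - v x) ^ 2 ≤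
      ∫ x in a..b, g x * (f (w x) - f (v x) - deriv f (v x) * (w x - v x)) := by
  have := hf.continuous
  have := hf.continuous_deriv one_le_two
  rw [← intervalIntegral.integral_const_mul]
  refine intervalIntegral.integral_mono_on hab (Continuous.intervalIntegrable (by fun_prop) a b)
    (Continuous.intervalIntegrable (by fun_prop) a b) fun x hx => ?_
  have htaylor := abs_sub_sub_deriv_mul_le hf hS hC (hvS x hx) (hwS x hx)
  have hprod : |g x * (f (w x) - f (v x) - deriv f (v x) * (w x - v x))| ≤
      M * (C * (w x - v x) ^ 2) := by
    rw [abs_mul]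
    exact mul_le_mul (hgM x hx) htaylor (abs_nonneg _) ((abs_nonneg _).trans (hgM x hx))
  linarith [neg_abs_le (g x * (f (w x) - f (v x) - deriv f (v x) * (w x - v x)))]

theorem integral_relative_energy_rate_eq (hf : ContDiff ℝ 1 f) {v w vt wt : ℝ → ℝ}
    (hv : ContDiff ℝ 2 v) (hw : ContDiff ℝ 2 w) (hwt : Continuous wt) {a b ν : ℝ} (c : ℝ)
    (hab : a ≤ b)
    (hpde : ∀ x ∈ Ioo a b, vt x + deriv (fun y => f (v y)) x = ν * deriv (deriv v) x) :
    ∫ x in a..b, 2 * (w x - v x) * (wt x - vt x) =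
      2 * (∫ x in a..b,
          (w x - v x) * (wt x + deriv (fun y => f (w y)) x - ν * deriv (deriv w) x))
        - 2 * (Hent f c (v b) (w b) - Hent f c (v a) (w a))
        - 2 * (∫ x in a..b, deriv v x * (f (w x) - f (v x) - deriv f (v x) * (w x - v x)))
        + 2 * ν * ((w b - v b) * deriv (fun y => w y - v y) b
          - (w a - v a) * deriv (fun y => w y - v y) a
          - ∫ x in a..b, deriv (fun y => w y - v y) x ^ 2) := by
  set e : ℝ → ℝ := fun y => w y - v y
  have he : ContDiff ℝ 2 e := hw.sub hv
  have hfd (g : ℝ → ℝ) (hg : ContDiff ℝ 2 g) (x : ℝ) :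
      deriv (fun y => f (g y)) x = deriv f (g x) * deriv g x :=
    deriv_comp x (hf.differentiable one_ne_zero _) (hg.differentiable two_ne_zero x)
  have he' : deriv e = fun y => deriv w y - deriv v y :=
    funext fun y => deriv_sub (hw.differentiable two_ne_zero y) (hv.differentiable two_ne_zero y)
  have he'' (x : ℝ) : deriv (deriv e) x = deriv (deriv w) x - deriv (deriv v) x := by
    rw [he']
    exact deriv_sub (hw.deriv'.differentiable one_ne_zero x)
      (hv.deriv'.differentiable one_ne_zero x)
  have hpointwise : ∀ x ∈ Ioo a b, 2 * (w x - v x) * (wt x - vt x) =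
      2 * (e x * (wt x + deriv f (w x) * deriv w x - ν * deriv (deriv w) x))
        - 2 * ((w x - v x) * deriv f (w x) * deriv w x - deriv v x * (f (w x) - f (v x)))
        - 2 * (deriv v x * (f (w x) - f (v x) - deriv f (v x) * (w x - v x)))
        + 2 * ν * (e x * deriv (deriv e) x) := by
    intro x hx
    have hpde_x := hpde x hx
    rw [hfd v hv] at hpde_x
    rw [he'' x]
    linear_combination (-2 * (w x - v x)) * hpde_x
  have := hf.continuous
  have := hf.continuous_deriv le_rfl
  have := hv.continuous
  have := hw.continuous
  have := hv.continuous_deriv one_le_two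
  have := hw.continuous_deriv one_le_two
  have := hw.deriv'.continuous_deriv le_rfl
  have := he.continuous_deriv one_le_two
  have := he.deriv'.continuous_deriv le_rfl
  simp only [hfd w hw]
  rw [← integral_Hent_flux_eq_sub hf c (hv.of_le one_le_two) (hw.of_le one_le_two),
    ← integral_mul_deriv_deriv_eq he, intervalIntegral.integral_congr_Ioo_of_le hab hpointwise,
    intervalIntegral.integral_add, intervalIntegral.integral_sub, intervalIntegral.integral_sub,
    intervalIntegral.integral_const_mul, intervalIntegral.integral_const_mul,
    intervalIntegral.integral_const_mul, intervalIntegral.integral_const_mul]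
  all_goals exact Continuous.intervalIntegrable (by fun_prop) a b

theorem relative_energy_rate_le (hf : ContDiff ℝ 2 f) {v w vt wt : ℝ → ℝ}
    (hv : ContDiff ℝ 2 v) (hw : ContDiff ℝ 2 w) (hwt : Continuous wt)
    {a b ν c C M : ℝ} {S : Set ℝ} (hab : a ≤ b)
    (hpde : ∀ x ∈ Ioo a b, vt x + deriv (fun y => f (v y)) x = ν * deriv (deriv v) x)
    (hS : Convex ℝ S) (hvS : ∀ x ∈ Icc a b, v x ∈ S) (hwS : ∀ x ∈ Icc a b, w x ∈ S)
    (hC : ∀ s ∈ S, |deriv (deriv f) s| ≤ C) (hM : ∀ x ∈ Icc a b, |deriv v x| ≤ M) :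
    ∫ x in a..b, 2 * (w x - v x) * (wt x - vt x) ≤
      2 * Hent f c (v a) (w a) - 2 * Hent f c (v b) (w b) +
        (1 + 2 * C * M) * (∫ x in a..b, (w x - v x) ^ 2) +
        (∫ x in a..b, (wt x + deriv (fun y => f (w y)) x - ν * deriv (deriv w) x) ^ 2) -
        2 * ν * (∫ x in a..b, (deriv (fun y => w y - v y) x) ^ 2) +
        2 * ν * ((w b - v b) * deriv (fun y => w y - v y) b -
          (w a - v a) * deriv (fun y => w y - v y) a) := by
  have := (hf.comp hw).continuous_deriv one_le_two
  have := hw.deriv'.continuous_deriv le_rfl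
  have hyoung := integral_two_mul_le_integral_sq_add (g := fun x => w x - v x)
    (h := fun x => wt x + deriv (fun y => f (w y)) x - ν * deriv (deriv w) x)
    (hw.continuous.sub hv.continuous) (by fun_prop) hab
  have htaylor := neg_mul_integral_sq_le_integral_mul_taylor_remainder hf hS hC
    (hv.continuous_deriv one_le_two) hv.continuous hw.continuous hab hM hvS hwS
  rw [integral_relative_energy_rate_eq (hf.of_le one_le_two) hv hw hwt c hab hpde]
  linarith

end OneVariable

theorem viscous_conservation_law_energy_inequality_general
    (T ν a B Mx : ℝ)
    (f : ℝ → ℝ) (hf : ContDiff ℝ 2 f)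
    (u ustar : ℝ → ℝ → ℝ)
    (hu : ContDiff ℝ 2 (fun q : ℝ × ℝ => u q.1 q.2))
    (hustar : ContDiff ℝ 2 (fun q : ℝ × ℝ => ustar q.1 q.2))
    (hpde : ∀ x ∈ Set.Ioo (0:ℝ) 1, ∀ t ∈ Set.Ioo (0:ℝ) T,
      deriv (fun s => u x s) t + deriv (fun y => f (u y t)) x =
        ν * deriv (fun y => deriv (fun z => u z t) y) x)
    (hrange : ∀ x ∈ Set.Icc (0:ℝ) 1, ∀ t ∈ Set.Icc (0:ℝ) T,
      |u x t| ≤ B ∧ |ustar x t| ≤ B)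
    (hux : ∀ x ∈ Set.Icc (0:ℝ) 1, ∀ t ∈ Set.Icc (0:ℝ) T,
      |deriv (fun y => u y t) x| ≤ Mx) :
    ∀ t ∈ Set.Ioo (0:ℝ) T,
      deriv (fun s => ∫ x in (0:ℝ)..1, (ustar x s - u x s) ^ 2) t ≤
        2 * Hent f a (u 0 t) (ustar 0 t) - 2 * Hent f a (u 1 t) (ustar 1 t) +
        (1 + 2 * (⨆ s : Set.Icc (-B) B, |deriv (deriv f) s|) * Mx) *
          (∫ x in (0:ℝ)..1, (ustar x t - u x t) ^ 2) +
        (∫ x in (0:ℝ)..1,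
          (deriv (fun s => ustar x s) t + deriv (fun y => f (ustar y t)) x -
            ν * deriv (fun y => deriv (fun z => ustar z t) y) x) ^ 2) -
        2 * ν * (∫ x in (0:ℝ)..1, (deriv (fun y => ustar y t - u y t) x) ^ 2) +
        2 * ν * ((ustar 1 t - u 1 t) * deriv (fun y => ustar y t - u y t) 1 -
                 (ustar 0 t - u 0 t) * deriv (fun y => ustar y t - u y t) 0) := by
  intro t ht
  have htIcc : t ∈ Icc 0 T := Ioo_subset_Icc_self ht
  have hdiff : ContDiff ℝ 1 (fun q : ℝ × ℝ => (ustar q.1 q.2 - u q.1 q.2) ^ 2) :=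
    ((hustar.sub hu).pow 2).of_le one_le_two
  have hrate : deriv (fun s => ∫ x in (0:ℝ)..1, (ustar x s - u x s) ^ 2) t =
      ∫ x in (0:ℝ)..1, 2 * (ustar x t - u x t) *
        (deriv (fun s => ustar x s) t - deriv (fun s => u x s) t) := by
    rw [(hasDerivAt_intervalIntegral_of_contDiff hdiff 0 1 t).deriv]
    refine intervalIntegral.integral_congr fun x _ => ?_
    have hsub := ((hustar.along_snd x).differentiable two_ne_zero t).hasDerivAt.sub
      ((hu.along_snd x).differentiable two_ne_zero t).hasDerivAt
    simpa using (hsub.fun_pow 2).deriv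
  rw [hrate]
  exact relative_energy_rate_le hf (hu.along_fst t) (hustar.along_fst t)
    ((continuous_deriv_snd_of_contDiff (hustar.of_le one_le_two)).comp
      (continuous_id.prodMk continuous_const))
    zero_le_one (fun x hx => hpde x hx t ht) (convex_Icc (-B) B)
    (fun x hx => abs_le.1 (hrange x hx t htIcc).1)
    (fun x hx => abs_le.1 (hrange x hx t htIcc).2)
    (fun s hs => Continuous.le_ciSup_Icc (hf.deriv'.continuous_deriv le_rfl).abs hs)
    (fun x hx => hux x hx t htIcc)

/-- Key differential inequality for the viscous scalar conservation law error
`û = u* - u`, with `ℛ_int = u*_t + f(u*)_x - ν u*_xx`: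
`d/dt ∫_0^1 û² ≤ 2H(u(0),u*(0)) - 2H(u(1),u*(1)) + 𝐂∫û² + ∫ℛ_int²
 - 2ν∫û_x² + 2ν(û(1)û_x(1) - û(0)û_x(0))`,
where `𝐂 = 1 + 2‖f''‖_{L^∞([-B,B])}‖u_x‖_{L^∞}` and `[-B,B]` contains the values of
`u` and `u*`. -/
theorem viscous_conservation_law_energy_inequality
    (T ν a B Mx : ℝ) (hT : 0 < T) (hν : 0 < ν) (hB : 0 ≤ B) (hMx : 0 ≤ Mx)
    (f : ℝ → ℝ) (hf : ContDiff ℝ 2 f)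
    (u ustar : ℝ → ℝ → ℝ)
    (hu : ContDiff ℝ 2 (fun q : ℝ × ℝ => u q.1 q.2))
    (hustar : ContDiff ℝ 2 (fun q : ℝ × ℝ => ustar q.1 q.2))
    (hpde : ∀ x ∈ Set.Ioo (0:ℝ) 1, ∀ t ∈ Set.Ioo (0:ℝ) T,
      deriv (fun s => u x s) t + deriv (fun y => f (u y t)) x =
        ν * deriv (fun y => deriv (fun z => u z t) y) x)
    (hbc : ∀ t ∈ Set.Icc (0:ℝ) T, u 0 t = 0 ∧ u 1 t = 0)
    (hrange : ∀ x ∈ Set.Icc (0:ℝ) 1, ∀ t ∈ Set.Icc (0:ℝ) T,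
      |u x t| ≤ B ∧ |ustar x t| ≤ B)
    (hux : ∀ x ∈ Set.Icc (0:ℝ) 1, ∀ t ∈ Set.Icc (0:ℝ) T,
      |deriv (fun y => u y t) x| ≤ Mx) :
    ∀ t ∈ Set.Ioo (0:ℝ) T,
      deriv (fun s => ∫ x in (0:ℝ)..1, (ustar x s - u x s) ^ 2) t ≤
        2 * Hent f a (u 0 t) (ustar 0 t) - 2 * Hent f a (u 1 t) (ustar 1 t) +
        (1 + 2 * (⨆ s : Set.Icc (-B) B, |deriv (deriv f) s|) * Mx) *
          (∫ x in (0:ℝ)..1, (ustar x t - u x t) ^ 2) +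
        (∫ x in (0:ℝ)..1,
          (deriv (fun s => ustar x s) t + deriv (fun y => f (ustar y t)) x -
            ν * deriv (fun y => deriv (fun z => ustar z t) y) x) ^ 2) -
        2 * ν * (∫ x in (0:ℝ)..1, (deriv (fun y => ustar y t - u y t) x) ^ 2) +
        2 * ν * ((ustar 1 t - u 1 t) * deriv (fun y => ustar y t - u y t) 1 -
                 (ustar 0 t - u 0 t) * deriv (fun y => ustar y t - u y t) 0) :=
  viscous_conservation_law_energy_inequality_general T ν a B Mx f hf u ustar hu hustar hpde hrange
    hux
end
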